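/- Let n, A, B, C be positive integers with M = A + B + C, and let S be a finite set of squares of the n×n board such that every square of S lies on one of A fixed columns, every square of S lies on one of B fixed rows, and every square of S lies on one of C fixed diagonals (each of either orientation). Then |S| ≤ ⌊M²/12⌋ if M ≡ 0, 1, 5, 7, or 11 (mod 12), and |S| ≤ ⌊M²/12⌋ + 1 otherwise. -/

import Mathlib

/-- The n×n board: squares (x,y) ∈ ℤ×ℤ with 1 ≤ x ≤ n and 1 ≤ y ≤ n. -/
noncomputable def board (n : ℕ) : Finset (ℤ × ℤ) := Finset.Icc 1 (n : ℤ) ×ˢ Finset.Icc 1 (n : ℤ)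

/-- A line of the board: a row (fixed y), a column (fixed x), a positive
diagonal (fixed x − y), or a negative diagonal (fixed x + y). -/
inductive Line : Type where
  | row : ℤ → Line
  | col : ℤ → Line
  | posDiag : ℤ → Line
  | negDiag : ℤ → Line
deriving DecidableEq

/-- The defining condition for a point to be on a given line. -/
def Line.pred : Line → ℤ × ℤ → Prop
  | .row b, p => p.2 = b
  | .col a, p => p.1 = a
  | .posDiag d, p => p.1 - p.2 = d
  | .negDiag s, p => p.1 + p.2 = s

instance (L : Line) (p : ℤ × ℤ) : Decidable (L.pred p) :=
  match L with
  | .row b => inferInstanceAs (Decidable (p.2 = b))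
  | .col a => inferInstanceAs (Decidable (p.1 = a))
  | .posDiag d => inferInstanceAs (Decidable (p.1 - p.2 = d))
  | .negDiag s => inferInstanceAs (Decidable (p.1 + p.2 = s))

/-- The set of squares of the n×n board lying on a line. -/
noncomputable def Line.squares (n : ℕ) (L : Line) : Finset (ℤ × ℤ) := (board n).filter L.pred

/-- The length of a line: its number of board squares. -/
noncomputable def Line.length (n : ℕ) (L : Line) : ℕ := (L.squares n).card

/-- Whether a line is a diagonal (of either orientation). -/
def Line.isDiag : Line → Prop
  | .posDiag _ => True
  | .negDiag _ => True
  | _ => False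

/-- The set of board squares attacked by a placement S of queens: squares q on
the board such that some queen p ∈ S with p ≠ q shares a row, column, or
diagonal with q. -/
noncomputable def attacked (n : ℕ) (S : Finset (ℤ × ℤ)) : Finset (ℤ × ℤ) :=
  S.biUnion fun p => (board n).filter fun q =>
    q ≠ p ∧ (p.1 = q.1 ∨ p.2 = q.2 ∨ p.1 - p.2 = q.1 - q.2 ∨ p.1 + p.2 = q.1 + q.2)

/-- G(m) = ⌊m²/12⌋ + 1 if m ≡ 3, 6, 9 (mod 12) or m = 10; ⌊m²/12⌋ otherwise. -/
def G (m : ℕ) : ℕ :=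
  if m % 12 = 3 ∨ m % 12 = 6 ∨ m % 12 = 9 ∨ m = 10 then m ^ 2 / 12 + 1 else m ^ 2 / 12

/-!
Fix `h : ℕ` and call a square *inner* if at least `h` of the chosen columns lie on either side
of its column and at least `h` of the chosen rows on either side of its row; there are at most
`(A - 2h)(B - 2h)` inner squares. Along a diagonal both coordinates are strictly monotone, so a
square of `S` on a diagonal that is not inner is among the first `h` or the last `h` squares of
`S` on that diagonal. Hence `|S| ≤ 2hC + (A - 2h)(B - 2h)` for every `h`, and trivially
`|S| ≤ C min(A, B)`. For `h = ⌊(A + B - C + 2)/4⌋` and `ε = 4h - (A + B - C) ∈ [-1, 2]`,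
`M² - 12(2hC + (A - 2h)(B - 2h)) = (A + B - 2C)² + 3(A - B)² - 3ε²`, and a congruence argument
modulo 12 shows that the right-hand side is nonnegative for `M ≡ 0, 1, 5, 7, 11`; when
`A + B ≤ C` or one of `A`, `B` is at least the sum of the other two, one of the two bounds is
already at most `M²/12`.
-/

open Finset

section Rank

variable {α β : Type*} [LinearOrder β]

theorem card_filter_lt_lt_of_lt {s : Finset α} {f : α → β} {a b : α} (ha : a ∈ s)
    (hab : f a < f b) : #{c ∈ s | f c < f a} < #{c ∈ s | f c < f b} := by
  refine card_lt_card ((ssubset_iff_of_subset fun c hc => ?_).2 ⟨a, ?_, ?_⟩)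
  · simp only [mem_filter] at hc ⊢
    exact ⟨hc.1, hc.2.trans hab⟩
  · simpa using ⟨ha, hab⟩
  · simp

theorem injOn_card_filter_lt {s : Finset α} {f : α → β} (hf : Set.InjOn f s) :
    Set.InjOn (fun a => #{c ∈ s | f c < f a}) s := by
  intro a ha b hb hab
  rcases lt_trichotomy (f a) (f b) with hlt | heq | hgt
  · exact absurd hab (card_filter_lt_lt_of_lt ha hlt).ne
  · exact hf ha hb heq
  · exact absurd hab (card_filter_lt_lt_of_lt hb hgt).ne'

theorem card_filter_card_filter_lt_lt_le (s : Finset α) {f : α → β} (hf : Set.InjOn f s)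
    (h : ℕ) : #{a ∈ s | #{c ∈ s | f c < f a} < h} ≤ h := by
  calc #{a ∈ s | #{c ∈ s | f c < f a} < h} ≤ #(range h) :=
        card_le_card_of_injOn _ (fun a ha => by simpa using (mem_filter.1 ha).2)
          ((injOn_card_filter_lt hf).mono (filter_subset _ s))
    _ = h := card_range h

theorem card_filter_lt_add_card_filter_gt_lt {s : Finset β} {x : β} (hx : x ∈ s) :
    #{y ∈ s | y < x} + #{y ∈ s | x < y} < #s := by
  have hgt : #{y ∈ s | x < y} < #{y ∈ s | ¬y < x} :=
    card_lt_card ((ssubset_iff_of_subset fun y hy => by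
      simp only [mem_filter] at hy ⊢; exact ⟨hy.1, hy.2.not_gt⟩).2 ⟨x, by simpa using hx, by simp⟩)
  have := card_filter_add_card_filter_not (s := s) (· < x)
  omega

/-- The elements of `s` having at least `h` elements of `s` on either side: `s` with its `h`
smallest and `h` largest elements removed. -/
def trim (s : Finset β) (h : ℕ) : Finset β :=
  {x ∈ s | h ≤ #{y ∈ s | y < x} ∧ h ≤ #{y ∈ s | x < y}}

theorem card_trim_le (s : Finset β) (h : ℕ) : #(trim s h) ≤ #s - 2 * h := by
  calc #(trim s h) ≤ #(Ico h (#s - h)) := by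
        refine card_le_card_of_injOn (fun x => #{y ∈ s | y < x}) (fun x hx => ?_)
          ((injOn_card_filter_lt Function.injective_id.injOn).mono (filter_subset _ s))
        simp only [trim, mem_coe, mem_filter] at hx
        have := card_filter_lt_add_card_filter_gt_lt hx.1
        simp only [coe_Ico, Set.mem_Ico]
        omega
    _ = #s - 2 * h := by rw [Nat.card_Ico]; omega

theorem card_filter_comp_le {γ : Type*} {s : Finset α} {t : Finset γ} {f : α → γ}
    (hf : Set.InjOn f s) (hst : ∀ a ∈ s, f a ∈ t) (p : γ → Prop) [DecidablePred p] :
    #{a ∈ s | p (f a)} ≤ #{c ∈ t | p c} :=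
  card_le_card_of_injOn f
    (fun a ha => by simp only [mem_coe, mem_filter] at ha ⊢; exact ⟨hst a ha.1, ha.2⟩)
    (hf.mono (filter_subset _ s))

theorem card_filter_lt_lt_or_of_not_mem_trim {s : Finset α} {t : Finset β} {f : α → β}
    (hf : Set.InjOn f s) (hst : ∀ a ∈ s, f a ∈ t) {a : α} (ha : a ∈ s) {h : ℕ}
    (hat : f a ∉ trim t h) : #{b ∈ s | f b < f a} < h ∨ #{b ∈ s | f a < f b} < h := by
  have hlt := card_filter_comp_le hf hst (· < f a)
  have hgt := card_filter_comp_le hf hst (f a < ·)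
  simp only [trim, mem_filter, hst a ha, true_and, not_and_or, not_le] at hat
  omega

end Rank

namespace Line

variable {L : Line}

theorem isDiag.injOn_fst (hL : L.isDiag) : Set.InjOn Prod.fst {p | L.pred p} := by
  intro p hp q hq h
  match L, hL with
  | .posDiag _, _ | .negDiag _, _ =>
    simp only [Set.mem_ofPred_eq, pred] at hp hq
    exact Prod.ext h (by omega)

theorem isDiag.injOn_snd (hL : L.isDiag) : Set.InjOn Prod.snd {p | L.pred p} := by
  intro p hp q hq h
  match L, hL with
  | .posDiag _, _ | .negDiag _, _ =>
    simp only [Set.mem_ofPred_eq, pred] at hp hq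
    exact Prod.ext (by omega) h

theorem isDiag.snd_lt_snd_iff (hL : L.isDiag) :
    (∀ p q, L.pred p → L.pred q → (q.2 < p.2 ↔ q.1 < p.1)) ∨
      ∀ p q, L.pred p → L.pred q → (q.2 < p.2 ↔ p.1 < q.1) := by
  match L, hL with
  | .posDiag _, _ => exact .inl fun p q hp hq => by simp only [pred] at hp hq; omega
  | .negDiag _, _ => exact .inr fun p q hp hq => by simp only [pred] at hp hq; omega

theorem isDiag.card_le_two_mul (hL : L.isDiag) {X Y : Finset ℤ} {h : ℕ}
    {T : Finset (ℤ × ℤ)} (hT : ∀ p ∈ T, L.pred p ∧ p.1 ∈ X ∧ p.2 ∈ Y)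
    (hout : ∀ p ∈ T, ¬(p.1 ∈ trim X h ∧ p.2 ∈ trim Y h)) : #T ≤ 2 * h := by
  have hfst : Set.InjOn Prod.fst (T : Set (ℤ × ℤ)) := hL.injOn_fst.mono fun p hp => (hT p hp).1
  have hsnd : Set.InjOn Prod.snd (T : Set (ℤ × ℤ)) := hL.injOn_snd.mono fun p hp => (hT p hp).1
  have hside : ∀ p ∈ T, #{q ∈ T | q.1 < p.1} < h ∨ #{q ∈ T | p.1 < q.1} < h := by
    intro p hp
    rcases not_and_or.1 (hout p hp) with hX | hY
    · exact card_filter_lt_lt_or_of_not_mem_trim hfst (fun q hq => (hT q hq).2.1) hp hX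
    · have := card_filter_lt_lt_or_of_not_mem_trim hsnd (fun q hq => (hT q hq).2.2) hp hY
      rcases hL.snd_lt_snd_iff with hmono | hanti
      · rwa [filter_congr fun q hq => hmono p q (hT p hp).1 (hT q hq).1,
          filter_congr fun q hq => hmono q p (hT q hq).1 (hT p hp).1] at this
      · rwa [filter_congr fun q hq => hanti p q (hT p hp).1 (hT q hq).1,
          filter_congr fun q hq => hanti q p (hT q hq).1 (hT p hp).1, or_comm] at this
  have hlow := card_filter_card_filter_lt_lt_le T hfst h
  have hhigh := card_filter_card_filter_lt_lt_le T
    (f := fun p => OrderDual.toDual p.1) (OrderDual.toDual.injective.comp_injOn hfst) h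
  simp only [OrderDual.toDual_lt_toDual] at hhigh
  calc #T ≤ #({p ∈ T | #{q ∈ T | q.1 < p.1} < h} ∪ {p ∈ T | #{q ∈ T | p.1 < q.1} < h}) := by
        refine card_le_card fun p hp => ?_
        simpa [hp] using hside p hp
    _ ≤ 2 * h := by grw [card_union_le]; omega

end Line

theorem card_le_card_mul_of_forall_exists {ι α : Type*} {s : Finset α} {I : Finset ι}
    {P : ι → α → Prop} [∀ i, DecidablePred (P i)] (hs : ∀ a ∈ s, ∃ i ∈ I, P i a) {k : ℕ}
    (hk : ∀ i ∈ I, #{a ∈ s | P i a} ≤ k) : #s ≤ #I * k := by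
  classical
  calc #s ≤ #(I.biUnion fun i => {a ∈ s | P i a}) := card_le_card fun a ha => by
        obtain ⟨i, hi, hia⟩ := hs a ha
        exact mem_biUnion.2 ⟨i, hi, mem_filter.2 ⟨ha, hia⟩⟩
    _ ≤ #I * k := card_biUnion_le_card_mul _ _ _ hk

section Covered

variable {X Y : Finset ℤ} {D : Finset Line} {S : Finset (ℤ × ℤ)}

theorem card_le_card_mul_min (hD : ∀ L ∈ D, L.isDiag) (hX : ∀ p ∈ S, p.1 ∈ X)
    (hY : ∀ p ∈ S, p.2 ∈ Y) (hSD : ∀ p ∈ S, ∃ L ∈ D, L.pred p) : #S ≤ #D * min #X #Y := by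
  refine card_le_card_mul_of_forall_exists hSD fun L hL => le_min ?_ ?_
  · exact card_le_card_of_injOn Prod.fst (fun p hp => hX p (mem_filter.1 hp).1)
      ((hD L hL).injOn_fst.mono fun p hp => (mem_filter.1 hp).2)
  · exact card_le_card_of_injOn Prod.snd (fun p hp => hY p (mem_filter.1 hp).1)
      ((hD L hL).injOn_snd.mono fun p hp => (mem_filter.1 hp).2)

theorem card_le_card_mul_two_mul_add (hD : ∀ L ∈ D, L.isDiag) (hX : ∀ p ∈ S, p.1 ∈ X)
    (hY : ∀ p ∈ S, p.2 ∈ Y) (hSD : ∀ p ∈ S, ∃ L ∈ D, L.pred p) (h : ℕ) :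
    #S ≤ #D * (2 * h) + (#X - 2 * h) * (#Y - 2 * h) := by
  classical
  have hinner : #{p ∈ S | p.1 ∈ trim X h ∧ p.2 ∈ trim Y h} ≤ (#X - 2 * h) * (#Y - 2 * h) :=
    calc #{p ∈ S | p.1 ∈ trim X h ∧ p.2 ∈ trim Y h} ≤ #(trim X h ×ˢ trim Y h) :=
          card_le_card fun p hp => mem_product.2 (mem_filter.1 hp).2
      _ ≤ (#X - 2 * h) * (#Y - 2 * h) := by
          rw [card_product]; exact Nat.mul_le_mul (card_trim_le X h) (card_trim_le Y h)
  have houter : #{p ∈ S | ¬(p.1 ∈ trim X h ∧ p.2 ∈ trim Y h)} ≤ #D * (2 * h) := by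
    refine card_le_card_mul_of_forall_exists (fun p hp => hSD p (mem_filter.1 hp).1)
      fun L hL => (hD L hL).card_le_two_mul (X := X) (Y := Y) (fun p hp => ?_) fun p hp => ?_
    · simp only [mem_filter] at hp
      exact ⟨hp.2, hX p hp.1.1, hY p hp.1.1⟩
    · exact (mem_filter.1 (mem_filter.1 hp).1).2
  rw [← card_filter_add_card_filter_not (s := S) fun p => p.1 ∈ trim X h ∧ p.2 ∈ trim Y h]
  omega

end Covered

theorem three_mul_sq_le (a b c h : ℤ) (hlo : -1 ≤ 4 * h - (a + b - c))
    (hhi : 4 * h - (a + b - c) ≤ 2)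
    (hmod : (a + b + c) % 12 = 0 ∨ (a + b + c) % 12 = 1 ∨ (a + b + c) % 12 = 5 ∨
      (a + b + c) % 12 = 7 ∨ (a + b + c) % 12 = 11) :
    3 * (4 * h - (a + b - c)) ^ 2 ≤ (a + b - 2 * c) ^ 2 + 3 * (a - b) ^ 2 := by
  -- `ε := 4h - (a + b - c) ≡ a + b + c (mod 2)`, `a + b - 2c ≡ a - b (mod 2)` and
  -- `a + b - 2c ≡ a + b + c (mod 3)`. For odd `ε` the sum `a + b + c` is prime to 6, so `a - b` and
  -- `a + b - 2c` do not both vanish; for `ε = 2` it is `≡ 0 (mod 12)`, which forces `a ≠ b` and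
  -- `a + b - 2c` to be an odd multiple of 3.
  obtain hε | hε | hε : 4 * h - (a + b - c) = 0 ∨ 4 * h - (a + b - c) = 2 ∨
      (4 * h - (a + b - c) = -1 ∨ 4 * h - (a + b - c) = 1) := by omega
  · rw [hε]
    positivity
  · obtain ⟨hE, hD | hD⟩ : a - b ≠ 0 ∧ (a + b - 2 * c ≤ -3 ∨ 3 ≤ a + b - 2 * c) := by omega
    all_goals rw [hε]; nlinarith [mul_self_pos.2 hE]
  · have hsq : (4 * h - (a + b - c)) ^ 2 = 1 := by rcases hε with hε | hε <;> rw [hε] <;> norm_num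
    obtain hE | hD | hD : a - b ≠ 0 ∨ a + b - 2 * c ≤ -2 ∨ 2 ≤ a + b - 2 * c := by omega
    · nlinarith [mul_self_pos.2 hE]
    all_goals nlinarith

theorem twelve_mul_le_sq (N A B C : ℕ) (hmin : N ≤ C * min A B)
    (htrim : ∀ h, N ≤ C * (2 * h) + (A - 2 * h) * (B - 2 * h)) :
    12 * N ≤ (A + B + C) ^ 2 + 12 ∧
      ((A + B + C) % 12 = 0 ∨ (A + B + C) % 12 = 1 ∨ (A + B + C) % 12 = 5 ∨
        (A + B + C) % 12 = 7 ∨ (A + B + C) % 12 = 11 → 12 * N ≤ (A + B + C) ^ 2) := by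
  by_cases hunbalanced : A + B ≤ C ∨ A + C ≤ B ∨ B + C ≤ A
  · suffices 12 * N ≤ (A + B + C) ^ 2 from ⟨by omega, fun _ => this⟩
    rcases hunbalanced with h | h | h
    · have := htrim 0
      simp only [mul_zero, Nat.sub_zero, zero_add] at this
      nlinarith [mul_le_mul' h h, sq_nonneg ((A : ℤ) - B)]
    · rw [min_eq_left (by omega)] at hmin
      nlinarith [mul_le_mul' h h, sq_nonneg ((A : ℤ) - C)]
    · rw [min_eq_right (by omega)] at hmin
      nlinarith [mul_le_mul' h h, sq_nonneg ((B : ℤ) - C)]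
  set h := (A + B - C + 2) / 4
  have hA : 2 * h ≤ A := by omega
  have hB : 2 * h ≤ B := by omega
  have hN : (N : ℤ) ≤ C * (2 * h) + (A - 2 * h) * (B - 2 * h) := by
    have := htrim h
    zify [hA, hB] at this
    exact this
  have hlo : -1 ≤ 4 * (h : ℤ) - (A + B - C) := by omega
  have hhi : 4 * (h : ℤ) - (A + B - C) ≤ 2 := by omega
  have hid : ((A : ℤ) + B + C) ^ 2 = 12 * (C * (2 * h) + (A - 2 * h) * (B - 2 * h)) +
      (A + B - 2 * C) ^ 2 + 3 * (A - B) ^ 2 - 3 * (4 * h - (A + B - C)) ^ 2 := by ring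
  constructor
  · zify
    nlinarith
  · intro hM
    have := three_mul_sq_le A B C h hlo hhi (by omega)
    zify
    linarith

theorem covered_set_card_bound_general (A B C M : ℕ) (hM : M = A + B + C)
    (S : Finset (ℤ × ℤ))
    (cols rows : Finset ℤ) (diags : Finset Line)
    (hcolsA : cols.card = A) (hrowsB : rows.card = B) (hdiagsC : diags.card = C)
    (hdiag : ∀ L ∈ diags, L.isDiag)
    (hSc : ∀ p ∈ S, p.1 ∈ cols) (hSr : ∀ p ∈ S, p.2 ∈ rows)
    (hSd : ∀ p ∈ S, ∃ L ∈ diags, L.pred p) :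
    S.card ≤ if M % 12 = 0 ∨ M % 12 = 1 ∨ M % 12 = 5 ∨ M % 12 = 7 ∨ M % 12 = 11
      then M ^ 2 / 12 else M ^ 2 / 12 + 1 := by
  subst hM hcolsA hrowsB hdiagsC
  obtain ⟨hbound, hbound_of_mod⟩ := twelve_mul_le_sq #S #cols #rows #diags
    (card_le_card_mul_min hdiag hSc hSr hSd) (card_le_card_mul_two_mul_add hdiag hSc hSr hSd)
  split_ifs with hmod
  · exact (Nat.le_div_iff_mul_le (by norm_num)).2 (by linarith [hbound_of_mod hmod])
  · omega

/-- If every square of a finite set S of board squares lies on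
one of A fixed columns, on one of B fixed rows, and on one of C fixed
diagonals, and M = A + B + C, then |S| ≤ ⌊M²/12⌋ when
M ≡ 0, 1, 5, 7, 11 (mod 12) and |S| ≤ ⌊M²/12⌋ + 1 otherwise. -/
theorem covered_set_card_bound (n A B C M : ℕ) (hn : 0 < n) (hA : 0 < A)
    (hB : 0 < B) (hC : 0 < C) (hM : M = A + B + C)
    (S : Finset (ℤ × ℤ)) (hS : S ⊆ board n)
    (cols rows : Finset ℤ) (diags : Finset Line)
    (hcolsA : cols.card = A) (hrowsB : rows.card = B) (hdiagsC : diags.card = C)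
    (hdiag : ∀ L ∈ diags, L.isDiag)
    (hSc : ∀ p ∈ S, p.1 ∈ cols) (hSr : ∀ p ∈ S, p.2 ∈ rows)
    (hSd : ∀ p ∈ S, ∃ L ∈ diags, L.pred p) :
    S.card ≤ if M % 12 = 0 ∨ M % 12 = 1 ∨ M % 12 = 5 ∨ M % 12 = 7 ∨ M % 12 = 11
      then M ^ 2 / 12 else M ^ 2 / 12 + 1 :=
  covered_set_card_bound_general A B C M hM S cols rows diags hcolsA hrowsB hdiagsC hdiag hSc hSr
    hSd
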